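/- arXiv:1712.05639 — 2 statements merged into one kernel-verified Lean document; each statement's English description precedes it below -/
import Mathlib

section
/- Let A, B be lists of natural numbers, let P be an even-length palindrome list of natural numbers, and let a, b be natural numbers with a ≠ b. Then dis(A ++ [a] ++ P ++ [b] ++ B) + dis(A ++ [b] ++ P ++ [a] ++ B) is odd. In other words, swapping two distinct entries that are separated by an even-length palindrome stretch changes the parity of the inversion count. -/
/-- Number of inversions of a list: pairs i < j with L_i > L_j. -/
def dis (L : List ℕ) : ℕ :=
  ((Finset.range L.length ×ˢ Finset.range L.length).filter
    (fun p => p.1 < p.2 ∧ L.getD p.1 0 > L.getD p.2 0)).card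

/-- Nearly symmetric: remove all 1's; if odd length, remove first entry;
    the result must be a palindrome. -/
def nearSym (L : List ℕ) : Prop :=
  let R := L.filter (fun x => x ≠ 1)
  let R' := if R.length % 2 = 1 then R.tail else R
  R' = R'.reverse

lemma dis_nil : dis [] = 0 := rfl

lemma countP_eq_card (L : List ℕ) (q : ℕ → Bool) :
    ((Finset.range L.length).filter (fun j => q (L.getD j 0))).card = L.countP q := by
  induction L with
  | nil => simp
  | cons x L ih =>
    rw [Finset.card_filter] at *
    rw [List.length_cons, Finset.sum_range_succ']
    simp only [List.getD_cons_succ, List.getD_cons_zero, List.countP_cons]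
    rw [ih]

lemma dis_cons (x : ℕ) (L : List ℕ) :
    dis (x :: L) = L.countP (fun y => decide (y < x)) + dis L := by
  unfold dis
  rw [Finset.card_filter, Finset.card_filter, Finset.sum_product, Finset.sum_product]
  rw [List.length_cons, Finset.sum_range_succ']
  have h0 : ∑ j ∈ Finset.range (L.length + 1),
      (if (0 : ℕ) < j ∧ (x :: L).getD 0 0 > (x :: L).getD j 0 then 1 else 0) =
      L.countP (fun y => decide (y < x)) := by
    rw [Finset.sum_range_succ']
    rw [← countP_eq_card L (fun y => decide (y < x)), Finset.card_filter]
    simp [List.getD_cons_succ]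
  have h1 : ∀ i, ∑ j ∈ Finset.range (L.length + 1),
      (if (i + 1 : ℕ) < j ∧ (x :: L).getD (i+1) 0 > (x :: L).getD j 0 then 1 else 0) =
      ∑ j ∈ Finset.range L.length,
      (if i < j ∧ L.getD i 0 > L.getD j 0 then 1 else 0) := by
    intro i
    rw [Finset.sum_range_succ']
    simp [List.getD_cons_succ, Nat.succ_lt_succ_iff]
  simp only [h1]
  rw [h0]
  ring

/-- cross inversions between two blocks -/
def cross (X Y : List ℕ) : ℕ := (X.map (fun x => Y.countP (fun y => decide (y < x)))).sum

lemma dis_append (X Y : List ℕ) : dis (X ++ Y) = dis X + dis Y + cross X Y := by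
  induction X with
  | nil => simp [dis_nil, cross]
  | cons x X ih =>
    rw [List.cons_append, dis_cons, dis_cons, ih, List.countP_append]
    simp [cross]
    ring

lemma cross_append_left (X X' Y : List ℕ) :
    cross (X ++ X') Y = cross X Y + cross X' Y := by
  simp [cross]

lemma cross_append_right (X Y Y' : List ℕ) :
    cross X (Y ++ Y') = cross X Y + cross X Y' := by
  simp [cross, List.countP_append]

lemma pal_count_even (P : List ℕ) (hpal : P.Palindrome) (hlen : P.length % 2 = 0) (a : ℕ) :
    P.count a % 2 = 0 := by
  induction hpal with
  | nil => simp
  | singleton x => simp at hlen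
  | @cons_concat x l h ih =>
    have hl : l.length % 2 = 0 := by
      simp [List.length_append] at hlen; omega
    have := ih hl
    simp only [List.count_cons, List.count_append, List.count_nil]
    omega

lemma cross_singleton_right (X : List ℕ) (b : ℕ) :
    cross X [b] = X.countP (fun x => decide (b < x)) := by
  induction X with
  | nil => simp [cross]
  | cons x X ih =>
    simp only [cross, List.map_cons, List.sum_cons, List.countP_cons] at *
    rw [ih]
    by_cases h : b < x <;> simp [h] <;> omega

lemma cross_singleton_left (Y : List ℕ) (a : ℕ) :
    cross [a] Y = Y.countP (fun y => decide (y < a)) := by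
  simp [cross]

lemma three_counts (L : List ℕ) (c : ℕ) :
    L.countP (fun y => decide (y < c)) + L.countP (fun y => decide (c < y)) + L.count c
      = L.length := by
  induction L with
  | nil => simp
  | cons x L ih =>
    simp only [List.countP_cons, List.count_cons, List.length_cons]
    rcases lt_trichotomy x c with h | h | h
    · simp [h, Nat.not_lt.2 h.le, Nat.ne_of_lt h]; omega
    · subst h; simp; omega
    · simp [h, Nat.not_lt.2 h.le, (Nat.ne_of_lt h).symm]; omega

theorem stmt4 (A B P : List ℕ) (hlen : P.length % 2 = 0) (hpal : P = P.reverse)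
    (a b : ℕ) (hab : a ≠ b) :
    (dis (A ++ [a] ++ P ++ [b] ++ B) + dis (A ++ [b] ++ P ++ [a] ++ B)) % 2 = 1 := by
  have hP : P.Palindrome := List.Palindrome.of_reverse_eq hpal.symm
  have e2 : ∀ c : ℕ, (cross [c] P + cross P [c]) % 2 = 0 := by
    intro c
    rw [cross_singleton_left, cross_singleton_right]
    have h3 := three_counts P c
    have h4 := pal_count_even P hP hlen c
    omega
  have e1 : cross [a] [b] + cross [b] [a] = 1 := by
    rw [cross_singleton_left, cross_singleton_right]
    simp only [List.countP_cons, List.countP_nil]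
    rcases lt_trichotomy a b with h | h | h
    · simp [h, Nat.not_lt.2 h.le]
    · exact absurd h hab
    · simp [h, Nat.not_lt.2 h.le]
  have expand : ∀ x y : ℕ, dis (A ++ [x] ++ P ++ [y] ++ B) =
      dis A + dis [x] + dis P + dis [y] + dis B
      + cross A [x] + cross A P + cross A [y] + cross A B
      + cross [x] P + cross [x] [y] + cross [x] B
      + cross P [y] + cross P B + cross [y] B := by
    intro x y
    simp only [dis_append, cross_append_left, cross_append_right]
    ring
  rw [expand a b, expand b a]
  have := e2 a
  have := e2 b
  omega
end

section
/- Let P be a palindrome list of natural numbers of even length, and let A, B be arbitrary lists of natural numbers. Then dis(A ++ P ++ B) and dis(A ++ B) + dis(P) have the same parity, and moreover dis(P) is even; consequently dis(A ++ P ++ B) ≡ dis(A ++ B) (mod 2). -/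
/-- A finset admitting a fixed-point-free involution has even cardinality. -/
lemma even_card_of_invol {α : Type*} [DecidableEq α] (f : α → α) :
    ∀ s : Finset α, (∀ x ∈ s, f x ∈ s) → (∀ x ∈ s, f (f x) = x) →
    (∀ x ∈ s, f x ≠ x) → s.card % 2 = 0 := by
  intro s
  induction s using Finset.strongInduction with
  | _ s ih =>
    intro h1 h2 h3
    rcases s.eq_empty_or_nonempty with rfl | ⟨x, hx⟩
    · simp
    · have hfx : f x ∈ s := h1 x hx
      have hne : f x ≠ x := h3 x hx
      have hsub : ({x, f x} : Finset α) ⊆ s := by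
        intro y hy; simp only [Finset.mem_insert, Finset.mem_singleton] at hy
        rcases hy with rfl | rfl <;> assumption
      have hss : s \ {x, f x} ⊂ s := Finset.sdiff_ssubset hsub ⟨x, by simp⟩
      have hc2 : ({x, f x} : Finset α).card = 2 := by
        rw [Finset.card_insert_of_notMem (by simp; exact fun h => hne h.symm),
          Finset.card_singleton]
      have hcard : s.card = (s \ {x, f x}).card + 2 := by
        rw [Finset.card_sdiff_of_subset hsub, hc2]
        have := Finset.card_le_card hsub
        omega
      have key := ih (s \ {x, f x}) hss ?_ ?_ ?_
      · omega
      · intro y hy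
        rw [Finset.mem_sdiff] at hy ⊢
        obtain ⟨hys, hyn⟩ := hy
        simp only [Finset.mem_insert, Finset.mem_singleton] at hyn
        push_neg at hyn
        refine ⟨h1 y hys, ?_⟩
        simp only [Finset.mem_insert, Finset.mem_singleton]
        push_neg
        constructor
        · intro h; apply hyn.2; rw [← h2 y hys, h]
        · intro h
          have : f (f y) = f (f x) := by rw [h]
          rw [h2 y hys, h2 x hx] at this
          exact hyn.1 this
      · intro y hy; exact h2 y (Finset.mem_sdiff.1 hy).1
      · intro y hy; exact h3 y (Finset.mem_sdiff.1 hy).1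

/-- The involution on inversions touching the block `[na, na+m)`. -/
def finv (na m : ℕ) (p : ℕ × ℕ) : ℕ × ℕ :=
  if na ≤ p.1 ∧ p.1 < na + m then
    if na ≤ p.2 ∧ p.2 < na + m then
      if p.2 < na + m / 2 then (p.1, 2 * na + m - 1 - p.2)
      else if na + m / 2 ≤ p.1 then (2 * na + m - 1 - p.1, p.2)
      else if p.1 < 2 * na + m - 1 - p.2 then (p.1, 2 * na + m - 1 - p.2)
      else (2 * na + m - 1 - p.1, p.2)
    else (2 * na + m - 1 - p.1, p.2)
  else if na ≤ p.2 ∧ p.2 < na + m then (p.1, 2 * na + m - 1 - p.2)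
  else p

set_option maxHeartbeats 1600000 in
lemma dis_sandwich (A B P : List ℕ) (hlen : P.length % 2 = 0) (hpal : P = P.reverse) :
    dis (A ++ P ++ B) % 2 = dis (A ++ B) % 2 := by
  set na := A.length with hna
  set m := P.length with hm
  set nb := B.length with hnb
  set L := A ++ P ++ B with hL
  clear_value na m nb L
  have hlenL : L.length = na + m + nb := by
    simp only [hL, List.length_append]; omega
  -- value lemmas
  have hvP : ∀ k, k < m → P.getD k 0 = P.getD (m - 1 - k) 0 := by
    intro k hk
    have h1 : P.getD k 0 = P.reverse.getD k 0 := by conv_lhs => rw [hpal]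
    rw [h1, List.getD_eq_getElem _ _ (by simpa using (by omega : k < P.length)),
      List.getD_eq_getElem _ _ (by omega : m - 1 - k < P.length), List.getElem_reverse]
    congr 1
    omega
  have hvblock : ∀ i, na ≤ i → i < na + m → L.getD i 0 = P.getD (i - na) 0 := by
    intro i h1 h2
    rw [hL, List.append_assoc, List.getD_append_right _ _ _ _ (by omega : A.length ≤ i),
      List.getD_append _ _ _ _ (by omega), hna]
  have hsym : ∀ i, na ≤ i → i < na + m →
      L.getD (2 * na + m - 1 - i) 0 = L.getD i 0 := by
    intro i h1 h2
    rw [hvblock i h1 h2, hvblock _ (by omega) (by omega)]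
    have : 2 * na + m - 1 - i - na = m - 1 - (i - na) := by omega
    rw [this, ← hvP (i - na) (by omega)]
  have hvout : ∀ i, i < na + nb →
      L.getD (if i < na then i else i + m) 0 = (A ++ B).getD i 0 := by
    intro i hi
    by_cases h : i < na
    · simp only [if_pos h]
      rw [hL, List.append_assoc, List.getD_append _ _ _ _ (by omega),
        List.getD_append _ _ _ _ (by omega)]
    · simp only [if_neg h]
      rw [hL, List.append_assoc, List.getD_append_right _ _ _ _ (by omega : A.length ≤ i + m),
        List.getD_append_right _ _ _ _ (by omega : A.length ≤ i)]
      have h2 : i + m - A.length = P.length + (i - A.length) := by omega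
      rw [h2, List.getD_append_right _ _ _ _ (by omega), Nat.add_sub_cancel_left]
  -- the inversion set of L
  set S := ((Finset.range L.length ×ˢ Finset.range L.length).filter
    (fun p => p.1 < p.2 ∧ L.getD p.1 0 > L.getD p.2 0)) with hS
  have hdisL : dis L = S.card := rfl
  set out : ℕ × ℕ → Prop := fun p =>
    (p.1 < na ∨ na + m ≤ p.1) ∧ (p.2 < na ∨ na + m ≤ p.2) with hout
  have hsplit : (S.filter out).card + (S.filter (fun p => ¬ out p)).card = S.card :=
    Finset.card_filter_add_card_filter_not _
  -- the outside part has card dis (A ++ B)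
  have hT : (S.filter out).card = dis (A ++ B) := by
    unfold dis
    refine Finset.card_nbij' (fun p => ((if p.1 < na then p.1 else p.1 - m),
        (if p.2 < na then p.2 else p.2 - m)))
      (fun p => ((if p.1 < na then p.1 else p.1 + m), (if p.2 < na then p.2 else p.2 + m)))
      ?_ ?_ ?_ ?_
    · rintro ⟨x, y⟩ hp
      simp only [Finset.mem_coe, hS, hout, Finset.mem_filter, Finset.mem_product, Finset.mem_range, hlenL] at hp
      obtain ⟨⟨⟨hp1, hp2⟩, hlt, hgt⟩, ho1, ho2⟩ := hp
      have hb1 : (if x < na then x else x - m) < na + nb := by split_ifs <;> omega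
      have hb2 : (if y < na then y else y - m) < na + nb := by split_ifs <;> omega
      have e1 : (if (if x < na then x else x - m) < na then (if x < na then x else x - m)
          else (if x < na then x else x - m) + m) = x := by split_ifs <;> omega
      have e2 : (if (if y < na then y else y - m) < na then (if y < na then y else y - m)
          else (if y < na then y else y - m) + m) = y := by split_ifs <;> omega
      simp only [Finset.mem_coe, Finset.mem_filter, Finset.mem_product, Finset.mem_range, List.length_append]
      refine ⟨⟨by omega, by omega⟩, by split_ifs <;> omega, ?_⟩
      have v1 := hvout _ hb1
      have v2 := hvout _ hb2
      rw [e1] at v1; rw [e2] at v2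
      rw [← v1, ← v2]; exact hgt
    · rintro ⟨x, y⟩ hp
      simp only [Finset.mem_coe, Finset.mem_filter, Finset.mem_product, Finset.mem_range,
        List.length_append] at hp
      obtain ⟨⟨hp1, hp2⟩, hlt, hgt⟩ := hp
      have hp1' : x < na + nb := by omega
      have hp2' : y < na + nb := by omega
      simp only [Finset.mem_coe, hS, hout, Finset.mem_filter, Finset.mem_product, Finset.mem_range, hlenL]
      refine ⟨⟨⟨by split_ifs <;> omega, by split_ifs <;> omega⟩, by split_ifs <;> omega, ?_⟩,
        by split_ifs <;> omega, by split_ifs <;> omega⟩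
      rw [hvout _ hp1', hvout _ hp2']; exact hgt
    · rintro ⟨x, y⟩ hp
      simp only [Finset.mem_coe, hS, hout, Finset.mem_filter, Finset.mem_product, Finset.mem_range, hlenL] at hp
      obtain ⟨⟨⟨hp1, hp2⟩, hlt, hgt⟩, ho1, ho2⟩ := hp
      simp only [Prod.mk.injEq]
      constructor <;> split_ifs <;> omega
    · rintro ⟨x, y⟩ hp
      simp only [Finset.mem_coe, Finset.mem_filter, Finset.mem_product, Finset.mem_range,
        List.length_append] at hp
      obtain ⟨⟨hp1, hp2⟩, hlt, hgt⟩ := hp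
      simp only [Prod.mk.injEq]
      constructor <;> split_ifs <;> omega
  -- the touching part is even
  have hU : (S.filter (fun p => ¬ out p)).card % 2 = 0 := by
    apply even_card_of_invol (finv na m)
    · -- maps into
      rintro ⟨x, y⟩ hp
      simp only [hS, hout, Finset.mem_filter, Finset.mem_product, Finset.mem_range, hlenL,
        not_and_or, not_or] at hp
      obtain ⟨⟨⟨hp1, hp2⟩, hlt, hgt⟩, htouch⟩ := hp
      have hvne : L.getD x 0 ≠ L.getD y 0 := by omega
      have hsg1 : 2 * na + m - 1 - y ≠ x ∨ y < na ∨ na + m ≤ y := by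
        by_cases hb : na ≤ y ∧ y < na + m
        · exact Or.inl (fun h => hvne (by rw [← h, hsym y hb.1 hb.2]))
        · right; omega
      have hsg2 : 2 * na + m - 1 - x ≠ y ∨ x < na ∨ na + m ≤ x := by
        by_cases hb : na ≤ x ∧ x < na + m
        · exact Or.inl (fun h => hvne (by rw [← hsym x hb.1 hb.2, h]))
        · right; omega
      simp only [hS, hout, Finset.mem_filter, Finset.mem_product, Finset.mem_range, hlenL,
        not_and_or, not_or, finv]
      split_ifs <;> dsimp only <;>
        refine ⟨⟨⟨by omega, by omega⟩, by omega, ?_⟩, by omega⟩ <;>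
        first
          | (rw [hsym y (by omega) (by omega)]; exact hgt)
          | (rw [hsym x (by omega) (by omega)]; exact hgt)
          | exact hgt
    · -- involution
      rintro ⟨x, y⟩ hp
      simp only [hS, hout, Finset.mem_filter, Finset.mem_product, Finset.mem_range, hlenL,
        not_and_or, not_or] at hp
      obtain ⟨⟨⟨hp1, hp2⟩, hlt, hgt⟩, htouch⟩ := hp
      have hvne : L.getD x 0 ≠ L.getD y 0 := by omega
      have hsg1 : 2 * na + m - 1 - y ≠ x ∨ y < na ∨ na + m ≤ y := by
        by_cases hb : na ≤ y ∧ y < na + m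
        · exact Or.inl (fun h => hvne (by rw [← h, hsym y hb.1 hb.2]))
        · right; omega
      have hsg2 : 2 * na + m - 1 - x ≠ y ∨ x < na ∨ na + m ≤ x := by
        by_cases hb : na ≤ x ∧ x < na + m
        · exact Or.inl (fun h => hvne (by rw [← hsym x hb.1 hb.2, h]))
        · right; omega
      by_cases c1 : na ≤ x ∧ x < na + m
      · by_cases c2 : na ≤ y ∧ y < na + m
        · by_cases h3 : y < na + m / 2
          · -- both in first half
            have d1 : na ≤ 2 * na + m - 1 - y ∧ 2 * na + m - 1 - y < na + m := by omega
            have d2 : ¬ (2 * na + m - 1 - y < na + m / 2) := by omega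
            have d3 : ¬ (na + m / 2 ≤ x) := by omega
            have d4 : x < 2 * na + m - 1 - (2 * na + m - 1 - y) := by omega
            simp only [finv, c1.1, c1.2, c2.1, c2.2, h3, d1.1, d1.2, d2, d3, d4,
              and_self, if_true, if_false, Prod.mk.injEq, true_and]
            omega
          · by_cases h4 : na + m / 2 ≤ x
            · -- both in second half
              have d1 : na ≤ 2 * na + m - 1 - x ∧ 2 * na + m - 1 - x < na + m := by omega
              have d2 : ¬ (y < na + m / 2) := h3
              have d3 : ¬ (na + m / 2 ≤ 2 * na + m - 1 - x) := by omega
              have d4 : ¬ (2 * na + m - 1 - x < 2 * na + m - 1 - y) := by omega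
              simp only [finv, c1.1, c1.2, c2.1, c2.2, h3, h4, d1.1, d1.2, d2, d3, d4,
                and_self, if_true, if_false, Prod.mk.injEq, and_true]
              omega
            · by_cases h5 : x < 2 * na + m - 1 - y
              · -- cross, then-branch
                have d1 : na ≤ 2 * na + m - 1 - y ∧ 2 * na + m - 1 - y < na + m := by omega
                have d2 : 2 * na + m - 1 - y < na + m / 2 := by omega
                simp only [finv, c1.1, c1.2, c2.1, c2.2, h3, h4, h5, d1.1, d1.2, d2,
                  and_self, if_true, if_false, Prod.mk.injEq, true_and]
                omega
              · -- cross, else-branch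
                have d1 : na ≤ 2 * na + m - 1 - x ∧ 2 * na + m - 1 - x < na + m := by omega
                have d2 : ¬ (y < na + m / 2) := h3
                have d3 : na + m / 2 ≤ 2 * na + m - 1 - x := by omega
                simp only [finv, c1.1, c1.2, c2.1, c2.2, h3, h4, h5, d1.1, d1.2, d2, d3,
                  and_self, if_true, if_false, Prod.mk.injEq, and_true]
                omega
        · -- x in block, y not
          have d1 : na ≤ 2 * na + m - 1 - x ∧ 2 * na + m - 1 - x < na + m := by omega
          simp only [finv, c1.1, c1.2, c2, d1.1, d1.2,
            and_self, if_true, if_false, Prod.mk.injEq, and_true]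
          omega
      · by_cases c2 : na ≤ y ∧ y < na + m
        · -- y in block, x not
          have d1 : na ≤ 2 * na + m - 1 - y ∧ 2 * na + m - 1 - y < na + m := by omega
          simp only [finv, c1, c2.1, c2.2, d1.1, d1.2,
            and_self, if_true, if_false, Prod.mk.injEq, true_and]
          omega
        · exact absurd (by omega : (na ≤ x ∧ x < na + m) ∨ (na ≤ y ∧ y < na + m))
            (by tauto)
    · -- no fixed points
      rintro ⟨x, y⟩ hp
      simp only [hS, hout, Finset.mem_filter, Finset.mem_product, Finset.mem_range, hlenL,
        not_and_or, not_or] at hp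
      obtain ⟨⟨⟨hp1, hp2⟩, hlt, hgt⟩, htouch⟩ := hp
      simp only [finv, ne_eq, Prod.mk.injEq, not_and_or]
      split_ifs <;> simp only [Prod.mk.injEq, not_and_or] <;> omega
  rw [hdisL, ← hsplit, hT]
  omega

theorem stmt15 (A B P : List ℕ) (hlen : P.length % 2 = 0) (hpal : P = P.reverse) :
    dis (A ++ P ++ B) % 2 = (dis (A ++ B) + dis P) % 2 ∧
    dis P % 2 = 0 ∧
    dis (A ++ P ++ B) % 2 = dis (A ++ B) % 2 := by
  have h3 := dis_sandwich A B P hlen hpal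
  have h2 : dis P % 2 = 0 := by
    have := dis_sandwich [] [] P hlen hpal
    simpa [dis] using this
  exact ⟨by omega, h2, h3⟩
end
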